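/- Let ν > 0, m ∈ ℝ, I ⊂ ℝ be an open interval, and let η, u : ℝ² × I → ℝ² and q : ℝ² × I → ℝ be smooth, 2-periodic in each spatial variable, with det(I + ∇η(·,t)) = 1 for all t, and suppose they satisfy the non-resistive MHD system in Lagrangian coordinates: η_t = u, u_t + ∇_𝒜 q − ν Δ_𝒜 u = m² ∂₂²η, div_𝒜 u = 0, where 𝒜 := (∇(η + id))^{-T}. Then for every t ∈ I the basic energy identity holds: (1/2) d/dt ∫_{(-1,1)²} ( |u|² + m² |∂₂η|² ) dy + ν ∫_{(-1,1)²} |∇_𝒜 u|² dy = 0, where |∇_𝒜 u|² := Σ_j |𝒜∇u_j|². -/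

import Mathlib

open MeasureTheory

noncomputable section

/-- A point of the plane `ℝ²`. -/
abbrev Pt := ℝ × ℝ

/-- A space-time point `(y, t) ∈ ℝ² × ℝ`. -/
abbrev PtT := (ℝ × ℝ) × ℝ

/-- Spatial partial derivative in the first variable. -/
def sp1 (g : PtT → ℝ) : PtT → ℝ := fun p => fderiv ℝ (fun y : Pt => g (y, p.2)) p.1 (1, 0)

/-- Spatial partial derivative in the second variable. -/
def sp2 (g : PtT → ℝ) : PtT → ℝ := fun p => fderiv ℝ (fun y : Pt => g (y, p.2)) p.1 (0, 1)

/-- Time derivative. -/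
def dt (g : PtT → ℝ) : PtT → ℝ := fun p => deriv (fun t => g (p.1, t)) p.2

/-- First component of a vector field. -/
def c1 (v : PtT → Pt) : PtT → ℝ := fun p => (v p).1

/-- Second component of a vector field. -/
def c2 (v : PtT → Pt) : PtT → ℝ := fun p => (v p).2

/-- `𝒜₁₁ = ∂₂ζ₂`, for `𝒜 = (∇ζ)^{-T}` in the cofactor form valid when `det ∇ζ = 1`. -/
def A11 (ζ : PtT → Pt) : PtT → ℝ := sp2 (c2 ζ)

/-- `𝒜₁₂ = −∂₁ζ₂`. -/
def A12 (ζ : PtT → Pt) : PtT → ℝ := fun p => -(sp1 (c2 ζ) p)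

/-- `𝒜₂₁ = −∂₂ζ₁`. -/
def A21 (ζ : PtT → Pt) : PtT → ℝ := fun p => -(sp2 (c1 ζ) p)

/-- `𝒜₂₂ = ∂₁ζ₁`. -/
def A22 (ζ : PtT → Pt) : PtT → ℝ := sp1 (c1 ζ)

/-- `div_𝒜 X = Σ_{l,k} 𝒜_{lk} ∂_k X_l`. -/
def divA (ζ : PtT → Pt) (X : PtT → Pt) : PtT → ℝ :=
  fun p => A11 ζ p * sp1 (c1 X) p + A12 ζ p * sp2 (c1 X) p
    + A21 ζ p * sp1 (c2 X) p + A22 ζ p * sp2 (c2 X) p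

/-- The flow map `ζ = η + id` associated with a displacement `η`. -/
def zetaOf (η : PtT → Pt) : PtT → Pt := fun p => ((η p).1 + p.1.1, (η p).2 + p.1.2)

/-- First component of `∇_𝒜 f`, i.e. `𝒜₁₁∂₁f + 𝒜₁₂∂₂f`. -/
def gradA1 (ζ : PtT → Pt) (f : PtT → ℝ) : PtT → ℝ :=
  fun p => A11 ζ p * sp1 f p + A12 ζ p * sp2 f p

/-- Second component of `∇_𝒜 f`, i.e. `𝒜₂₁∂₁f + 𝒜₂₂∂₂f`. -/
def gradA2 (ζ : PtT → Pt) (f : PtT → ℝ) : PtT → ℝ :=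
  fun p => A21 ζ p * sp1 f p + A22 ζ p * sp2 f p

/-- The operator `Δ_𝒜 f = div_𝒜 ∇_𝒜 f`. -/
def lapA (ζ : PtT → Pt) (f : PtT → ℝ) : PtT → ℝ :=
  fun p => A11 ζ p * sp1 (gradA1 ζ f) p + A12 ζ p * sp2 (gradA1 ζ f) p
    + A21 ζ p * sp1 (gradA2 ζ f) p + A22 ζ p * sp2 (gradA2 ζ f) p

/-- `g` is 2-periodic in each spatial variable. -/
def SPeriodic (g : PtT → ℝ) : Prop :=
  (∀ p : PtT, g ((p.1.1 + 2, p.1.2), p.2) = g p) ∧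
    ∀ p : PtT, g ((p.1.1, p.1.2 + 2), p.2) = g p

/-- The periodic cell `(-1,1)²`. -/
def cell : Set Pt := Set.Ioo (-1 : ℝ) 1 ×ˢ Set.Ioo (-1 : ℝ) 1

/-!
Multiply the momentum equation by `u` and the divergence constraint by `q`. Every first order
operator in sight (`∂₁`, `∂₂`, `∂ₜ` and the two components of `∇_𝒜`) is a directional derivative,
so the product rule rewrites the result as
`½ ∂ₜ(|u|² + m²|∂₂η|²) + ν|∇_𝒜 u|² = div_𝒜 (ν (∇_𝒜 u)ᵀ u - q u) + ∂₂(m² u·∂₂η)`,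
where `ηₜ = u` turns `∂₂u·∂₂η` into `½ ∂ₜ|∂₂η|²`. The Piola identity makes `div_𝒜` an ordinary
divergence with coefficients built from `∇η`, so both flux terms integrate to zero over the
periodic cell; differentiating under the integral sign gives the energy identity.
-/

open scoped ContDiff

section DirectionalDerivative

variable {E : Type*} [NormedAddCommGroup E] [NormedSpace ℝ E]

def IsDirectionalDerivAt (D : (E → ℝ) → ℝ) (p : E) : Prop :=
  ∃ v : E, ∀ f : E → ℝ, DifferentiableAt ℝ f p → D f = fderiv ℝ f p v

variable {D : (E → ℝ) → ℝ} {p : E} {f g : E → ℝ}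

namespace IsDirectionalDerivAt

theorem add (hD : IsDirectionalDerivAt D p) (hf : DifferentiableAt ℝ f p)
    (hg : DifferentiableAt ℝ g p) : D (fun x => f x + g x) = D f + D g := by
  obtain ⟨v, hv⟩ := hD
  rw [hv (fun x => f x + g x) (hf.add hg), hv f hf, hv g hg, fderiv_fun_add hf hg]
  rfl

theorem sub (hD : IsDirectionalDerivAt D p) (hf : DifferentiableAt ℝ f p)
    (hg : DifferentiableAt ℝ g p) : D (fun x => f x - g x) = D f - D g := by
  obtain ⟨v, hv⟩ := hD
  rw [hv (fun x => f x - g x) (hf.sub hg), hv f hf, hv g hg, fderiv_fun_sub hf hg]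
  rfl

theorem mul (hD : IsDirectionalDerivAt D p) (hf : DifferentiableAt ℝ f p)
    (hg : DifferentiableAt ℝ g p) : D (fun x => f x * g x) = f p * D g + g p * D f := by
  obtain ⟨v, hv⟩ := hD
  rw [hv (fun x => f x * g x) (hf.mul hg), hv f hf, hv g hg, fderiv_fun_mul hf hg]
  rfl

theorem const_mul (hD : IsDirectionalDerivAt D p) (hf : DifferentiableAt ℝ f p) (c : ℝ) :
    D (fun x => c * f x) = c * D f := by
  obtain ⟨v, hv⟩ := hD
  rw [hv (fun x => c * f x) (hf.const_mul c), hv f hf, fderiv_const_mul hf]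
  rfl

theorem neg (hD : IsDirectionalDerivAt D p) (hf : DifferentiableAt ℝ f p) :
    D (fun x => -f x) = -D f := by
  obtain ⟨v, hv⟩ := hD
  rw [hv (fun x => -f x) hf.neg, hv f hf, fderiv_fun_neg]
  rfl

theorem sq (hD : IsDirectionalDerivAt D p) (hf : DifferentiableAt ℝ f p) :
    D (fun x => f x ^ 2) = 2 * f p * D f := by
  simp only [pow_two, hD.mul hf hf]
  ring

end IsDirectionalDerivAt

theorem fderiv_fderiv_apply_comm (hf : ContDiff ℝ 2 f) (p v w : E) :
    fderiv ℝ (fun x => fderiv ℝ f x w) p v = fderiv ℝ (fun x => fderiv ℝ f x v) p w := by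
  have hdf : DifferentiableAt ℝ (fderiv ℝ f) p :=
    (hf.fderiv_right (m := 1) (by norm_num)).differentiable (by norm_num) p
  have hsymm := (hf.contDiffAt (x := p)).isSymmSndFDerivAt
    (by rw [minSmoothness_of_isRCLikeNormedField])
  rw [fderiv_clm_apply hdf (differentiableAt_const _),
    fderiv_clm_apply hdf (differentiableAt_const _)]
  simpa using hsymm v w

end DirectionalDerivative

section SliceDerivatives

variable {f g : PtT → ℝ} {p : PtT}

theorem fderiv_spatialSlice (hf : DifferentiableAt ℝ f p) :
    fderiv ℝ (fun y : Pt => f (y, p.2)) p.1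
      = (fderiv ℝ f p).comp (ContinuousLinearMap.inl ℝ Pt ℝ) :=
  (hf.hasFDerivAt.comp p.1 (hasFDerivAt_prodMk_left p.1 p.2)).fderiv

theorem sp1_eq_fderiv (hf : DifferentiableAt ℝ f p) : sp1 f p = fderiv ℝ f p ((1, 0), 0) := by
  simp [sp1, fderiv_spatialSlice hf]

theorem sp2_eq_fderiv (hf : DifferentiableAt ℝ f p) : sp2 f p = fderiv ℝ f p ((0, 1), 0) := by
  simp [sp2, fderiv_spatialSlice hf]

theorem dt_eq_fderiv (hf : DifferentiableAt ℝ f p) : dt f p = fderiv ℝ f p ((0, 0), 1) := by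
  exact (hf.hasFDerivAt.comp p.2 (hasFDerivAt_prodMk_right p.1 p.2)).hasDerivAt.deriv

theorem isDirectionalDerivAt_sp1 (p : PtT) : IsDirectionalDerivAt (fun f => sp1 f p) p :=
  ⟨_, fun _ => sp1_eq_fderiv⟩

theorem isDirectionalDerivAt_sp2 (p : PtT) : IsDirectionalDerivAt (fun f => sp2 f p) p :=
  ⟨_, fun _ => sp2_eq_fderiv⟩

theorem isDirectionalDerivAt_dt (p : PtT) : IsDirectionalDerivAt (fun f => dt f p) p :=
  ⟨_, fun _ => dt_eq_fderiv⟩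

theorem isDirectionalDerivAt_gradA1 (ζ : PtT → Pt) (p : PtT) :
    IsDirectionalDerivAt (fun f => gradA1 ζ f p) p :=
  ⟨((A11 ζ p, A12 ζ p), 0), fun f hf => by
    show A11 ζ p * sp1 f p + A12 ζ p * sp2 f p = _
    rw [sp1_eq_fderiv hf, sp2_eq_fderiv hf, ← smul_eq_mul, ← smul_eq_mul, ← map_smul, ← map_smul,
      ← map_add]
    simp⟩

theorem isDirectionalDerivAt_gradA2 (ζ : PtT → Pt) (p : PtT) :
    IsDirectionalDerivAt (fun f => gradA2 ζ f p) p :=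
  ⟨((A21 ζ p, A22 ζ p), 0), fun f hf => by
    show A21 ζ p * sp1 f p + A22 ζ p * sp2 f p = _
    rw [sp1_eq_fderiv hf, sp2_eq_fderiv hf, ← smul_eq_mul, ← smul_eq_mul, ← map_smul, ← map_smul,
      ← map_add]
    simp⟩

end SliceDerivatives

section SliceSmoothness

variable {f : PtT → ℝ} {n m : WithTop ℕ∞}

theorem sp1_eq_fun (hf : Differentiable ℝ f) : sp1 f = fun p => fderiv ℝ f p ((1, 0), 0) :=
  funext fun p => sp1_eq_fderiv (hf p)

theorem sp2_eq_fun (hf : Differentiable ℝ f) : sp2 f = fun p => fderiv ℝ f p ((0, 1), 0) :=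
  funext fun p => sp2_eq_fderiv (hf p)

theorem dt_eq_fun (hf : Differentiable ℝ f) : dt f = fun p => fderiv ℝ f p ((0, 0), 1) :=
  funext fun p => dt_eq_fderiv (hf p)

theorem ContDiff.fderiv_apply_const (hf : ContDiff ℝ n f) (hmn : m + 1 ≤ n) (v : PtT) :
    ContDiff ℝ m (fun p => fderiv ℝ f p v) :=
  (hf.fderiv_right hmn).clm_apply contDiff_const

theorem ContDiff.differentiable_of_add_one_le (hf : ContDiff ℝ n f) (hmn : m + 1 ≤ n) :
    Differentiable ℝ f :=
  hf.differentiable (by rintro rfl; simp at hmn)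

theorem ContDiff.sp1 (hf : ContDiff ℝ n f) (hmn : m + 1 ≤ n) : ContDiff ℝ m (sp1 f) := by
  rw [sp1_eq_fun (hf.differentiable_of_add_one_le hmn)]
  exact hf.fderiv_apply_const hmn _

theorem ContDiff.sp2 (hf : ContDiff ℝ n f) (hmn : m + 1 ≤ n) : ContDiff ℝ m (sp2 f) := by
  rw [sp2_eq_fun (hf.differentiable_of_add_one_le hmn)]
  exact hf.fderiv_apply_const hmn _

theorem ContDiff.dt (hf : ContDiff ℝ n f) (hmn : m + 1 ≤ n) : ContDiff ℝ m (dt f) := by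
  rw [dt_eq_fun (hf.differentiable_of_add_one_le hmn)]
  exact hf.fderiv_apply_const hmn _

theorem sp1_sp2_comm (hf : ContDiff ℝ 2 f) (p : PtT) : sp1 (sp2 f) p = sp2 (sp1 f) p := by
  have hf' : Differentiable ℝ f := hf.differentiable (by norm_num)
  have hd (v : PtT) : DifferentiableAt ℝ (fun x => fderiv ℝ f x v) p :=
    (hf.fderiv_apply_const (m := 1) (by norm_num) v).differentiable (by norm_num) p
  rw [sp2_eq_fun hf', sp1_eq_fun hf', sp1_eq_fderiv (hd _), sp2_eq_fderiv (hd _),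
    fderiv_fderiv_apply_comm hf]

theorem dt_sp2_comm (hf : ContDiff ℝ 2 f) (p : PtT) : dt (sp2 f) p = sp2 (dt f) p := by
  have hf' : Differentiable ℝ f := hf.differentiable (by norm_num)
  have hd (v : PtT) : DifferentiableAt ℝ (fun x => fderiv ℝ f x v) p :=
    (hf.fderiv_apply_const (m := 1) (by norm_num) v).differentiable (by norm_num) p
  rw [sp2_eq_fun hf', dt_eq_fun hf', dt_eq_fderiv (hd _), sp2_eq_fderiv (hd _),
    fderiv_fderiv_apply_comm hf]

end SliceSmoothness

namespace SPeriodic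

variable {f g : PtT → ℝ}

theorem add (hf : SPeriodic f) (hg : SPeriodic g) : SPeriodic (fun p => f p + g p) :=
  ⟨fun p => by simp only [hf.1, hg.1], fun p => by simp only [hf.2, hg.2]⟩

theorem sub (hf : SPeriodic f) (hg : SPeriodic g) : SPeriodic (fun p => f p - g p) :=
  ⟨fun p => by simp only [hf.1, hg.1], fun p => by simp only [hf.2, hg.2]⟩

theorem mul (hf : SPeriodic f) (hg : SPeriodic g) : SPeriodic (fun p => f p * g p) :=
  ⟨fun p => by simp only [hf.1, hg.1], fun p => by simp only [hf.2, hg.2]⟩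

theorem const_mul (hf : SPeriodic f) (c : ℝ) : SPeriodic (fun p => c * f p) :=
  ⟨fun p => by simp only [hf.1], fun p => by simp only [hf.2]⟩

theorem neg (hf : SPeriodic f) : SPeriodic (fun p => -f p) :=
  ⟨fun p => by simp only [hf.1], fun p => by simp only [hf.2]⟩

end SPeriodic

section Periodicity

variable {g : PtT → ℝ}

theorem fderiv_spatialSlice_translate {c : Pt} {k : ℝ}
    (h : ∀ p : PtT, g (p.1 + c, p.2) = g p + k) (p : PtT) :
    fderiv ℝ (fun y : Pt => g (y, p.2)) (p.1 + c) = fderiv ℝ (fun y : Pt => g (y, p.2)) p.1 := by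
  rw [← fderiv_comp_add_right, funext fun y => h (y, p.2), fderiv_add_const]

theorem sPeriodic_sp1_sp2_of_quasiPeriodic {k₁ k₂ : ℝ}
    (h₁ : ∀ p : PtT, g ((p.1.1 + 2, p.1.2), p.2) = g p + k₁)
    (h₂ : ∀ p : PtT, g ((p.1.1, p.1.2 + 2), p.2) = g p + k₂) :
    SPeriodic (sp1 g) ∧ SPeriodic (sp2 g) := by
  have e₁ (a b t : ℝ) :
      fderiv ℝ (fun y : Pt => g (y, t)) (a + 2, b) = fderiv ℝ (fun y : Pt => g (y, t)) (a, b) := by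
    simpa using fderiv_spatialSlice_translate (c := (2, 0))
      (fun ⟨⟨a, b⟩, t⟩ => by simpa using h₁ ((a, b), t)) ((a, b), t)
  have e₂ (a b t : ℝ) :
      fderiv ℝ (fun y : Pt => g (y, t)) (a, b + 2) = fderiv ℝ (fun y : Pt => g (y, t)) (a, b) := by
    simpa using fderiv_spatialSlice_translate (c := (0, 2))
      (fun ⟨⟨a, b⟩, t⟩ => by simpa using h₂ ((a, b), t)) ((a, b), t)
  refine ⟨⟨?_, ?_⟩, ⟨?_, ?_⟩⟩ <;> rintro ⟨⟨a, b⟩, t⟩ <;> simp only [sp1, sp2, e₁, e₂]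

theorem SPeriodic.sp1_sp2 (hg : SPeriodic g) : SPeriodic (sp1 g) ∧ SPeriodic (sp2 g) :=
  sPeriodic_sp1_sp2_of_quasiPeriodic (k₁ := 0) (k₂ := 0) (by simpa using hg.1) (by simpa using hg.2)

end Periodicity

section Integration

open Set

theorem integrableOn_cell {F : Pt → ℝ} (hF : Continuous F) : IntegrableOn F cell :=
  (hF.integrableOn_Icc (a := (-1, -1)) (b := (1, 1))).mono_set <| by
    rw [cell, ← Icc_prod_Icc]
    exact prod_mono Ioo_subset_Icc_self Ioo_subset_Icc_self

theorem integral_cell_eq_iterated {F : Pt → ℝ} (hF : Continuous F) :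
    ∫ y in cell, F y = ∫ a in Ioo (-1 : ℝ) 1, ∫ b in Ioo (-1 : ℝ) 1, F (a, b) := by
  have hint := integrableOn_cell hF
  rw [cell, Measure.volume_eq_prod] at hint ⊢
  exact setIntegral_prod F hint

theorem integral_cell_eq_iterated_swap {F : Pt → ℝ} (hF : Continuous F) :
    ∫ y in cell, F y = ∫ b in Ioo (-1 : ℝ) 1, ∫ a in Ioo (-1 : ℝ) 1, F (a, b) := by
  have hint := integrableOn_cell (hF.comp continuous_swap)
  rw [cell, Measure.volume_eq_prod] at hint ⊢
  rw [← setIntegral_prod_swap]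
  exact setIntegral_prod (fun z => F z.swap) hint

theorem integral_Ioo_eq_sub_of_hasDerivAt {h h' : ℝ → ℝ} {a b : ℝ} (hab : a ≤ b)
    (hd : ∀ x, HasDerivAt h (h' x) x) (hc : Continuous h') :
    ∫ x in Ioo a b, h' x = h b - h a := by
  rw [← integral_Ioc_eq_integral_Ioo, ← intervalIntegral.integral_of_le hab]
  exact intervalIntegral.integral_eq_sub_of_hasDerivAt (fun x _ => hd x) (hc.intervalIntegrable _ _)

variable {g : PtT → ℝ}

theorem hasDerivAt_sp1 {a b t : ℝ} (hg : DifferentiableAt ℝ g ((a, b), t)) :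
    HasDerivAt (fun x => g ((x, b), t)) (sp1 g ((a, b), t)) a := by
  rw [sp1_eq_fderiv hg]
  exact hg.hasFDerivAt.comp_hasDerivAt a
    (((hasDerivAt_id a).prodMk (hasDerivAt_const a b)).prodMk (hasDerivAt_const a t))

theorem hasDerivAt_sp2 {a b t : ℝ} (hg : DifferentiableAt ℝ g ((a, b), t)) :
    HasDerivAt (fun x => g ((a, x), t)) (sp2 g ((a, b), t)) b := by
  rw [sp2_eq_fderiv hg]
  exact hg.hasFDerivAt.comp_hasDerivAt b
    (((hasDerivAt_const b a).prodMk (hasDerivAt_id b)).prodMk (hasDerivAt_const b t))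

theorem integral_sp1_eq_zero (hg : ContDiff ℝ 1 g) (hper : SPeriodic g) (t : ℝ) :
    ∫ y in cell, sp1 g (y, t) = 0 := by
  have hc : Continuous (sp1 g) := (hg.sp1 (m := 0) (by norm_num)).continuous
  have inner (b : ℝ) : ∫ a in Ioo (-1 : ℝ) 1, sp1 g ((a, b), t) = 0 := by
    rw [integral_Ioo_eq_sub_of_hasDerivAt (by norm_num)
      (fun a => hasDerivAt_sp1 (hg.differentiable one_ne_zero _)) (by fun_prop)]
    have h := hper.1 ((-1, b), t)
    norm_num at h
    rw [h, sub_self]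
  simp [integral_cell_eq_iterated_swap (by fun_prop : Continuous fun y => sp1 g (y, t)), inner]

theorem integral_sp2_eq_zero (hg : ContDiff ℝ 1 g) (hper : SPeriodic g) (t : ℝ) :
    ∫ y in cell, sp2 g (y, t) = 0 := by
  have hc : Continuous (sp2 g) := (hg.sp2 (m := 0) (by norm_num)).continuous
  have inner (a : ℝ) : ∫ b in Ioo (-1 : ℝ) 1, sp2 g ((a, b), t) = 0 := by
    rw [integral_Ioo_eq_sub_of_hasDerivAt (by norm_num)
      (fun b => hasDerivAt_sp2 (hg.differentiable one_ne_zero _)) (by fun_prop)]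
    have h := hper.2 ((a, -1), t)
    norm_num at h
    rw [h, sub_self]
  simp [integral_cell_eq_iterated (by fun_prop : Continuous fun y => sp2 g (y, t)), inner]

theorem hasDerivAt_dt {y : Pt} {t : ℝ} (hg : DifferentiableAt ℝ g (y, t)) :
    HasDerivAt (fun s => g (y, s)) (dt g (y, t)) t :=
  (hg.comp t ((differentiableAt_const y).prodMk differentiableAt_id)).hasDerivAt

theorem hasDerivAt_integral_cell (hg : ContDiff ℝ 1 g) (t : ℝ) :
    HasDerivAt (fun s => ∫ y in cell, g (y, s)) (∫ y in cell, dt g (y, t)) t := by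
  have hdt : Continuous (dt g) := (hg.dt (m := 0) (by norm_num)).continuous
  obtain ⟨C, hC⟩ := ((isCompact_Icc.prod isCompact_Icc).prod
    (isCompact_Icc (a := t - 1) (b := t + 1))).exists_bound_of_continuousOn hdt.continuousOn
  have hcell : MeasurableSet cell := measurableSet_Ioo.prod measurableSet_Ioo
  refine (hasDerivAt_integral_of_dominated_loc_of_deriv_le (bound := fun _ => C)
    (Metric.ball_mem_nhds t one_pos)
    (.of_forall fun s => (by fun_prop : Continuous fun y : Pt => g (y, s)).aestronglyMeasurable)
    (integrableOn_cell (by fun_prop))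
    (by fun_prop : Continuous fun y : Pt => dt g (y, t)).aestronglyMeasurable
    ?_ (integrableOn_cell continuous_const)
    (.of_forall fun y s _ => hasDerivAt_dt (hg.differentiable one_ne_zero _))).2
  filter_upwards [ae_restrict_mem hcell] with y hy s hs
  rw [Real.ball_eq_Ioo] at hs
  exact hC _ ⟨⟨Ioo_subset_Icc_self hy.1, Ioo_subset_Icc_self hy.2⟩, Ioo_subset_Icc_self hs⟩

end Integration

section Piola

variable {ζ η X : PtT → Pt} {f : PtT → ℝ} {n m : WithTop ℕ∞}

theorem ContDiff.c1 (hX : ContDiff ℝ n X) : ContDiff ℝ n (c1 X) := contDiff_fst.comp hX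

theorem ContDiff.c2 (hX : ContDiff ℝ n X) : ContDiff ℝ n (c2 X) := contDiff_snd.comp hX

theorem ContDiff.zetaOf (hη : ContDiff ℝ n η) : ContDiff ℝ n (zetaOf η) :=
  hη.add contDiff_fst

theorem ContDiff.A_entries (hζ : ContDiff ℝ n ζ) (hmn : m + 1 ≤ n) :
    ContDiff ℝ m (A11 ζ) ∧ ContDiff ℝ m (A12 ζ) ∧ ContDiff ℝ m (A21 ζ) ∧ ContDiff ℝ m (A22 ζ) :=
  ⟨hζ.c2.sp2 hmn, (hζ.c2.sp1 hmn).neg, (hζ.c1.sp2 hmn).neg, hζ.c1.sp1 hmn⟩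

theorem ContDiff.gradA1 (hζ : ContDiff ℝ n ζ) (hf : ContDiff ℝ n f) (hmn : m + 1 ≤ n) :
    ContDiff ℝ m (gradA1 ζ f) := by
  obtain ⟨h11, h12, -, -⟩ := hζ.A_entries hmn
  have := hf.sp1 hmn
  have := hf.sp2 hmn
  unfold _root_.gradA1
  fun_prop

theorem ContDiff.gradA2 (hζ : ContDiff ℝ n ζ) (hf : ContDiff ℝ n f) (hmn : m + 1 ≤ n) :
    ContDiff ℝ m (gradA2 ζ f) := by
  obtain ⟨-, -, h21, h22⟩ := hζ.A_entries hmn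
  have := hf.sp1 hmn
  have := hf.sp2 hmn
  unfold _root_.gradA2
  fun_prop

theorem ContDiff.divA (hζ : ContDiff ℝ n ζ) (hX : ContDiff ℝ n X) (hmn : m + 1 ≤ n) :
    ContDiff ℝ m (divA ζ X) := by
  obtain ⟨h11, h12, h21, h22⟩ := hζ.A_entries hmn
  have := hX.c1.sp1 hmn
  have := hX.c1.sp2 hmn
  have := hX.c2.sp1 hmn
  have := hX.c2.sp2 hmn
  unfold _root_.divA
  fun_prop

theorem sPeriodic_A_zetaOf (h₁ : SPeriodic (c1 η)) (h₂ : SPeriodic (c2 η)) :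
    SPeriodic (A11 (zetaOf η)) ∧ SPeriodic (A12 (zetaOf η)) ∧ SPeriodic (A21 (zetaOf η)) ∧
      SPeriodic (A22 (zetaOf η)) := by
  obtain ⟨d11, d21⟩ := sPeriodic_sp1_sp2_of_quasiPeriodic (g := c1 (zetaOf η)) (k₁ := 2) (k₂ := 0)
    (fun p => by show c1 η _ + (p.1.1 + 2) = c1 η p + p.1.1 + 2; rw [h₁.1]; ring)
    (fun p => by show c1 η _ + p.1.1 = c1 η p + p.1.1 + 0; rw [h₁.2]; ring)
  obtain ⟨d12, d22⟩ := sPeriodic_sp1_sp2_of_quasiPeriodic (g := c2 (zetaOf η)) (k₁ := 0) (k₂ := 2)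
    (fun p => by show c2 η _ + p.1.2 = c2 η p + p.1.2 + 0; rw [h₂.1]; ring)
    (fun p => by show c2 η _ + (p.1.2 + 2) = c2 η p + p.1.2 + 2; rw [h₂.2]; ring)
  exact ⟨d22, d12.neg, d21.neg, d11⟩

theorem SPeriodic.gradA1 (hf : SPeriodic f) (h11 : SPeriodic (A11 ζ)) (h12 : SPeriodic (A12 ζ)) :
    SPeriodic (gradA1 ζ f) :=
  (h11.mul hf.sp1_sp2.1).add (h12.mul hf.sp1_sp2.2)

theorem SPeriodic.gradA2 (hf : SPeriodic f) (h21 : SPeriodic (A21 ζ)) (h22 : SPeriodic (A22 ζ)) :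
    SPeriodic (gradA2 ζ f) :=
  (h21.mul hf.sp1_sp2.1).add (h22.mul hf.sp1_sp2.2)

/-- The Piola identity: the rows of the cofactor matrix `𝒜` are divergence free, so `div_𝒜 X` is
an ordinary divergence. -/
theorem divA_eq_sp1_add_sp2 {p : PtT} (hζ : ContDiff ℝ 2 ζ) (hX₁ : DifferentiableAt ℝ (c1 X) p)
    (hX₂ : DifferentiableAt ℝ (c2 X) p) :
    divA ζ X p = sp1 (fun p => A11 ζ p * c1 X p + A21 ζ p * c2 X p) p
      + sp2 (fun p => A12 ζ p * c1 X p + A22 ζ p * c2 X p) p := by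
  obtain ⟨h11, h12, h21, h22⟩ := hζ.A_entries (m := 1) (by norm_num)
  have d11 := h11.differentiable one_ne_zero
  have d12 := h12.differentiable one_ne_zero
  have d21 := h21.differentiable one_ne_zero
  have d22 := h22.differentiable one_ne_zero
  have D₁ := isDirectionalDerivAt_sp1 p
  have D₂ := isDirectionalDerivAt_sp2 p
  have piola₁ : sp1 (A11 ζ) p + sp2 (A12 ζ) p = 0 := by
    show sp1 (sp2 (c2 ζ)) p + sp2 (fun p => -sp1 (c2 ζ) p) p = 0
    rw [D₂.neg ((hζ.c2.sp1 (m := 1) (by norm_num)).differentiable one_ne_zero p),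
      sp1_sp2_comm hζ.c2, add_neg_cancel]
  have piola₂ : sp1 (A21 ζ) p + sp2 (A22 ζ) p = 0 := by
    show sp1 (fun p => -sp2 (c1 ζ) p) p + sp2 (sp1 (c1 ζ)) p = 0
    rw [D₁.neg ((hζ.c1.sp2 (m := 1) (by norm_num)).differentiable one_ne_zero p),
      sp1_sp2_comm hζ.c1, neg_add_cancel]
  simp (disch := fun_prop) only [D₁.add, D₁.mul, D₂.add, D₂.mul]
  unfold divA
  linear_combination -(c1 X p * piola₁ + c2 X p * piola₂)

theorem integral_divA_zetaOf_eq_zero (hη : ContDiff ℝ 2 η)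
    (hηper : SPeriodic (c1 η) ∧ SPeriodic (c2 η)) (hX : ContDiff ℝ 1 X)
    (hXper : SPeriodic (c1 X) ∧ SPeriodic (c2 X)) (t : ℝ) :
    ∫ y in cell, divA (zetaOf η) X (y, t) = 0 := by
  obtain ⟨p11, p12, p21, p22⟩ := sPeriodic_A_zetaOf hηper.1 hηper.2
  obtain ⟨h11, h12, h21, h22⟩ := hη.zetaOf.A_entries (m := 1) (by norm_num)
  have hX₁ := hX.c1
  have hX₂ := hX.c2
  have hF₁ : ContDiff ℝ 1 fun p => A11 (zetaOf η) p * c1 X p + A21 (zetaOf η) p * c2 X p := by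
    fun_prop
  have hF₂ : ContDiff ℝ 1 fun p => A12 (zetaOf η) p * c1 X p + A22 (zetaOf η) p * c2 X p := by
    fun_prop
  have hc₁ := (hF₁.sp1 (m := 0) (by norm_num)).continuous
  have hc₂ := (hF₂.sp2 (m := 0) (by norm_num)).continuous
  simp_rw [divA_eq_sp1_add_sp2 hη.zetaOf (hX₁.differentiable one_ne_zero _)
    (hX₂.differentiable one_ne_zero _)]
  rw [integral_add (integrableOn_cell (by fun_prop)) (integrableOn_cell (by fun_prop)),
    integral_sp1_eq_zero hF₁ ((p11.mul hXper.1).add (p21.mul hXper.2)),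
    integral_sp2_eq_zero hF₂ ((p12.mul hXper.1).add (p22.mul hXper.2)), add_zero]

end Piola

section EnergyIdentity

def energyDensity (m : ℝ) (η u : PtT → Pt) : PtT → ℝ := fun p =>
  c1 u p ^ 2 + c2 u p ^ 2 + m ^ 2 * (sp2 (c1 η) p ^ 2 + sp2 (c2 η) p ^ 2)

def dissipationDensity (ζ u : PtT → Pt) : PtT → ℝ := fun p =>
  gradA1 ζ (c1 u) p ^ 2 + gradA2 ζ (c1 u) p ^ 2 + gradA1 ζ (c2 u) p ^ 2 + gradA2 ζ (c2 u) p ^ 2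

def stressFlux (ν : ℝ) (ζ u : PtT → Pt) (q : PtT → ℝ) : PtT → Pt := fun p =>
  (ν * (c1 u p * gradA1 ζ (c1 u) p + c2 u p * gradA1 ζ (c2 u) p) - q p * c1 u p,
    ν * (c1 u p * gradA2 ζ (c1 u) p + c2 u p * gradA2 ζ (c2 u) p) - q p * c2 u p)

def magneticFlux (m : ℝ) (η u : PtT → Pt) : PtT → ℝ := fun p =>
  m ^ 2 * (c1 u p * sp2 (c1 η) p + c2 u p * sp2 (c2 η) p)

variable {ν m : ℝ} {ζ η u X : PtT → Pt} {q f g : PtT → ℝ} {p : PtT}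

theorem divA_eq_gradA : divA ζ X p = gradA1 ζ (c1 X) p + gradA2 ζ (c2 X) p := by
  simp only [divA, gradA1, gradA2]
  ring

theorem lapA_eq_gradA : lapA ζ f p = gradA1 ζ (gradA1 ζ f) p + gradA2 ζ (gradA2 ζ f) p := by
  simp only [lapA, gradA1, gradA2]
  ring

theorem contDiff_energyDensity (hη : ContDiff ℝ 2 η) (hu : ContDiff ℝ 1 u) :
    ContDiff ℝ 1 (energyDensity m η u) := by
  have := hη.c1.sp2 (m := 1) (by norm_num)
  have := hη.c2.sp2 (m := 1) (by norm_num)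
  have := hu.c1
  have := hu.c2
  unfold energyDensity
  fun_prop

theorem contDiff_dissipationDensity (hζ : ContDiff ℝ 2 ζ) (hu : ContDiff ℝ 2 u) :
    ContDiff ℝ 1 (dissipationDensity ζ u) := by
  have := hζ.gradA1 hu.c1 (m := 1) (by norm_num)
  have := hζ.gradA2 hu.c1 (m := 1) (by norm_num)
  have := hζ.gradA1 hu.c2 (m := 1) (by norm_num)
  have := hζ.gradA2 hu.c2 (m := 1) (by norm_num)
  unfold dissipationDensity
  fun_prop

theorem contDiff_stressFlux (hζ : ContDiff ℝ 2 ζ) (hu : ContDiff ℝ 2 u) (hq : ContDiff ℝ 1 q) :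
    ContDiff ℝ 1 (stressFlux ν ζ u q) := by
  have := hζ.gradA1 hu.c1 (m := 1) (by norm_num)
  have := hζ.gradA2 hu.c1 (m := 1) (by norm_num)
  have := hζ.gradA1 hu.c2 (m := 1) (by norm_num)
  have := hζ.gradA2 hu.c2 (m := 1) (by norm_num)
  have := hu.c1.of_le one_le_two
  have := hu.c2.of_le one_le_two
  unfold stressFlux
  fun_prop

theorem contDiff_magneticFlux (hη : ContDiff ℝ 2 η) (hu : ContDiff ℝ 1 u) :
    ContDiff ℝ 1 (magneticFlux m η u) := by
  have := hη.c1.sp2 (m := 1) (by norm_num)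
  have := hη.c2.sp2 (m := 1) (by norm_num)
  have := hu.c1
  have := hu.c2
  unfold magneticFlux
  fun_prop

theorem sPeriodic_stressFlux (hη₁ : SPeriodic (c1 η)) (hη₂ : SPeriodic (c2 η))
    (hu₁ : SPeriodic (c1 u)) (hu₂ : SPeriodic (c2 u)) (hq : SPeriodic q) :
    SPeriodic (c1 (stressFlux ν (zetaOf η) u q)) ∧
      SPeriodic (c2 (stressFlux ν (zetaOf η) u q)) := by
  obtain ⟨h11, h12, h21, h22⟩ := sPeriodic_A_zetaOf hη₁ hη₂
  exact ⟨(((hu₁.mul (hu₁.gradA1 h11 h12)).add (hu₂.mul (hu₂.gradA1 h11 h12))).const_mul ν).sub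
      (hq.mul hu₁),
    (((hu₁.mul (hu₁.gradA2 h21 h22)).add (hu₂.mul (hu₂.gradA2 h21 h22))).const_mul ν).sub
      (hq.mul hu₂)⟩

theorem sPeriodic_magneticFlux (hη₁ : SPeriodic (c1 η)) (hη₂ : SPeriodic (c2 η))
    (hu₁ : SPeriodic (c1 u)) (hu₂ : SPeriodic (c2 u)) : SPeriodic (magneticFlux m η u) :=
  ((hu₁.mul hη₁.sp1_sp2.2).add (hu₂.mul hη₂.sp1_sp2.2)).const_mul (m ^ 2)

theorem sp2_congr_slice (h : ∀ y, f (y, p.2) = g (y, p.2)) : sp2 f p = sp2 g p := by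
  simp only [sp2, h]

theorem dt_energyDensity (hη : ContDiff ℝ 2 η) (hu : Differentiable ℝ u) :
    dt (energyDensity m η u) p
      = 2 * (c1 u p * dt (c1 u) p + c2 u p * dt (c2 u) p)
        + 2 * m ^ 2 * (sp2 (c1 η) p * dt (sp2 (c1 η)) p + sp2 (c2 η) p * dt (sp2 (c2 η)) p) := by
  have := (hη.c1.sp2 (m := 1) (by norm_num)).differentiable one_ne_zero
  have := (hη.c2.sp2 (m := 1) (by norm_num)).differentiable one_ne_zero
  have : Differentiable ℝ (c1 u) := differentiable_fst.comp hu
  have : Differentiable ℝ (c2 u) := differentiable_snd.comp hu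
  have D := isDirectionalDerivAt_dt p
  unfold energyDensity
  simp (disch := fun_prop) only [D.add, D.sq, D.const_mul]
  ring

theorem divA_stressFlux (hζ : ContDiff ℝ 2 ζ) (hu : ContDiff ℝ 2 u) (hq : DifferentiableAt ℝ q p) :
    divA ζ (stressFlux ν ζ u q) p
      = ν * (dissipationDensity ζ u p + c1 u p * lapA ζ (c1 u) p + c2 u p * lapA ζ (c2 u) p)
        - (c1 u p * gradA1 ζ q p + c2 u p * gradA2 ζ q p) - q p * divA ζ u p := by
  have := hu.c1.differentiable two_ne_zero
  have := hu.c2.differentiable two_ne_zero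
  have := (hζ.gradA1 hu.c1 (m := 1) (by norm_num)).differentiable one_ne_zero
  have := (hζ.gradA2 hu.c1 (m := 1) (by norm_num)).differentiable one_ne_zero
  have := (hζ.gradA1 hu.c2 (m := 1) (by norm_num)).differentiable one_ne_zero
  have := (hζ.gradA2 hu.c2 (m := 1) (by norm_num)).differentiable one_ne_zero
  have G₁ := isDirectionalDerivAt_gradA1 ζ p
  have G₂ := isDirectionalDerivAt_gradA2 ζ p
  have e₁ : c1 (stressFlux ν ζ u q) = fun p =>
      ν * (c1 u p * gradA1 ζ (c1 u) p + c2 u p * gradA1 ζ (c2 u) p) - q p * c1 u p := rfl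
  have e₂ : c2 (stressFlux ν ζ u q) = fun p =>
      ν * (c1 u p * gradA2 ζ (c1 u) p + c2 u p * gradA2 ζ (c2 u) p) - q p * c2 u p := rfl
  rw [divA_eq_gradA, e₁, e₂]
  simp (disch := fun_prop) only [G₁.sub, G₁.const_mul, G₁.add, G₁.mul, G₂.sub, G₂.const_mul,
    G₂.add, G₂.mul]
  rw [lapA_eq_gradA, lapA_eq_gradA, divA_eq_gradA, dissipationDensity]
  ring

theorem sp2_magneticFlux (hη : ContDiff ℝ 2 η) (hu : Differentiable ℝ u) :
    sp2 (magneticFlux m η u) p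
      = m ^ 2 * (sp2 (c1 u) p * sp2 (c1 η) p + c1 u p * sp2 (sp2 (c1 η)) p
        + (sp2 (c2 u) p * sp2 (c2 η) p + c2 u p * sp2 (sp2 (c2 η)) p)) := by
  have := (hη.c1.sp2 (m := 1) (by norm_num)).differentiable one_ne_zero
  have := (hη.c2.sp2 (m := 1) (by norm_num)).differentiable one_ne_zero
  have : Differentiable ℝ (c1 u) := differentiable_fst.comp hu
  have : Differentiable ℝ (c2 u) := differentiable_snd.comp hu
  have D := isDirectionalDerivAt_sp2 p
  unfold magneticFlux
  simp (disch := fun_prop) only [D.const_mul, D.add, D.mul]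
  ring

theorem energy_identity_pointwise (hζ : ContDiff ℝ 2 ζ) (hη : ContDiff ℝ 2 η)
    (hu : ContDiff ℝ 2 u) (hq : DifferentiableAt ℝ q p)
    (hkin : ∀ y, dt (c1 η) (y, p.2) = c1 u (y, p.2) ∧ dt (c2 η) (y, p.2) = c2 u (y, p.2))
    (hmom : dt (c1 u) p + gradA1 ζ q p - ν * lapA ζ (c1 u) p = m ^ 2 * sp2 (sp2 (c1 η)) p ∧
      dt (c2 u) p + gradA2 ζ q p - ν * lapA ζ (c2 u) p = m ^ 2 * sp2 (sp2 (c2 η)) p)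
    (hdiv : divA ζ u p = 0) :
    1 / 2 * dt (energyDensity m η u) p + ν * dissipationDensity ζ u p
      = divA ζ (stressFlux ν ζ u q) p + sp2 (magneticFlux m η u) p := by
  have hmag₁ : dt (sp2 (c1 η)) p = sp2 (c1 u) p := by
    rw [dt_sp2_comm hη.c1]
    exact sp2_congr_slice fun y => (hkin y).1
  have hmag₂ : dt (sp2 (c2 η)) p = sp2 (c2 u) p := by
    rw [dt_sp2_comm hη.c2]
    exact sp2_congr_slice fun y => (hkin y).2
  have hu' := hu.differentiable two_ne_zero
  rw [dt_energyDensity hη hu', divA_stressFlux hζ hu hq, sp2_magneticFlux hη hu', hmag₁, hmag₂,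
    hdiv]
  linear_combination c1 u p * hmom.1 + c2 u p * hmom.2

end EnergyIdentity

theorem statement16_general (ν m a b : ℝ)
    (η u : PtT → Pt) (q : PtT → ℝ)
    (hη : ContDiff ℝ (⊤ : ℕ∞) (fun p : PtT => η p))
    (hu : ContDiff ℝ (⊤ : ℕ∞) (fun p : PtT => u p))
    (hq : ContDiff ℝ (⊤ : ℕ∞) q)
    (hper : SPeriodic (c1 η) ∧ SPeriodic (c2 η) ∧ SPeriodic (c1 u) ∧
      SPeriodic (c2 u) ∧ SPeriodic q)
    (heq1 : ∀ p : PtT, p.2 ∈ Set.Ioo a b →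
      dt (c1 η) p = c1 u p ∧ dt (c2 η) p = c2 u p)
    (heq2 : ∀ p : PtT, p.2 ∈ Set.Ioo a b →
      dt (c1 u) p + gradA1 (zetaOf η) q p - ν * lapA (zetaOf η) (c1 u) p
          = m ^ 2 * sp2 (sp2 (c1 η)) p ∧
      dt (c2 u) p + gradA2 (zetaOf η) q p - ν * lapA (zetaOf η) (c2 u) p
          = m ^ 2 * sp2 (sp2 (c2 η)) p)
    (heq3 : ∀ p : PtT, p.2 ∈ Set.Ioo a b → divA (zetaOf η) u p = 0) :
    ∀ t ∈ Set.Ioo a b,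
      (1 / 2) * deriv (fun s : ℝ => ∫ y in cell,
          ((c1 u (y, s)) ^ 2 + (c2 u (y, s)) ^ 2
            + m ^ 2 * ((sp2 (c1 η) (y, s)) ^ 2 + (sp2 (c2 η) (y, s)) ^ 2))) t
        + ν * ∫ y in cell,
            ((gradA1 (zetaOf η) (c1 u) (y, t)) ^ 2 + (gradA2 (zetaOf η) (c1 u) (y, t)) ^ 2
              + (gradA1 (zetaOf η) (c2 u) (y, t)) ^ 2
              + (gradA2 (zetaOf η) (c2 u) (y, t)) ^ 2) = 0 := by
  intro t ht
  obtain ⟨pη₁, pη₂, pu₁, pu₂, pq⟩ := hper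
  have hη₂ : ContDiff ℝ 2 η := hη.of_le (by norm_cast)
  have hu₂ : ContDiff ℝ 2 u := hu.of_le (by norm_cast)
  have hq₁ : ContDiff ℝ 1 q := hq.of_le (by norm_cast)
  have hE := contDiff_energyDensity (m := m) hη₂ (hu₂.of_le one_le_two)
  have hX := contDiff_stressFlux (ν := ν) hη₂.zetaOf hu₂ hq₁
  have hB := contDiff_magneticFlux (m := m) hη₂ (hu₂.of_le one_le_two)
  have hcE := (hE.dt (m := 0) (by norm_num)).continuous
  have hcD := (contDiff_dissipationDensity hη₂.zetaOf hu₂).continuous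
  have hcX := (hη₂.zetaOf.of_le one_le_two |>.divA hX (m := 0) (by norm_num)).continuous
  have hcB := (hB.sp2 (m := 0) (by norm_num)).continuous
  have balance (y : Pt) := energy_identity_pointwise hη₂.zetaOf hη₂ hu₂
    (hq₁.differentiable one_ne_zero (y, t)) (fun y' => heq1 (y', t) ht) (heq2 (y, t) ht)
    (heq3 (y, t) ht)
  change 1 / 2 * deriv (fun s => ∫ y in cell, energyDensity m η u (y, s)) t
    + ν * ∫ y in cell, dissipationDensity (zetaOf η) u (y, t) = 0
  rw [(hasDerivAt_integral_cell hE t).deriv, ← integral_const_mul, ← integral_const_mul,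
    ← integral_add (integrableOn_cell (by fun_prop)) (integrableOn_cell (by fun_prop))]
  simp_rw [balance]
  rw [integral_add (integrableOn_cell (by fun_prop)) (integrableOn_cell (by fun_prop)),
    integral_divA_zetaOf_eq_zero hη₂ ⟨pη₁, pη₂⟩ hX (sPeriodic_stressFlux pη₁ pη₂ pu₁ pu₂ pq),
    integral_sp2_eq_zero hB (sPeriodic_magneticFlux pη₁ pη₂ pu₁ pu₂), add_zero]

/-- basic energy identity: let `(η, u, q)` be a smooth, spatially
2-periodic solution of the non-resistive MHD system in Lagrangian coordinates
`η_t = u`, `u_t + ∇_𝒜 q − νΔ_𝒜 u = m²∂₂²η`, `div_𝒜 u = 0` on `ℝ² × I` with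
`det(I + ∇η(·,t)) = 1`, where `𝒜 = (∇(η + id))^{-T}`.  Then for every `t ∈ I`:
`(1/2) d/dt ∫ (|u|² + m²|∂₂η|²) dy + ν ∫ |∇_𝒜 u|² dy = 0`. -/
theorem statement16 (ν m a b : ℝ) (hν : 0 < ν) (hab : a < b)
    (η u : PtT → Pt) (q : PtT → ℝ)
    (hη : ContDiff ℝ (⊤ : ℕ∞) (fun p : PtT => η p))
    (hu : ContDiff ℝ (⊤ : ℕ∞) (fun p : PtT => u p))
    (hq : ContDiff ℝ (⊤ : ℕ∞) q)
    (hper : SPeriodic (c1 η) ∧ SPeriodic (c2 η) ∧ SPeriodic (c1 u) ∧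
      SPeriodic (c2 u) ∧ SPeriodic q)
    (hdet : ∀ p : PtT, p.2 ∈ Set.Ioo a b →
      sp1 (c1 (zetaOf η)) p * sp2 (c2 (zetaOf η)) p
        - sp1 (c2 (zetaOf η)) p * sp2 (c1 (zetaOf η)) p = 1)
    (heq1 : ∀ p : PtT, p.2 ∈ Set.Ioo a b →
      dt (c1 η) p = c1 u p ∧ dt (c2 η) p = c2 u p)
    (heq2 : ∀ p : PtT, p.2 ∈ Set.Ioo a b →
      dt (c1 u) p + gradA1 (zetaOf η) q p - ν * lapA (zetaOf η) (c1 u) p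
          = m ^ 2 * sp2 (sp2 (c1 η)) p ∧
      dt (c2 u) p + gradA2 (zetaOf η) q p - ν * lapA (zetaOf η) (c2 u) p
          = m ^ 2 * sp2 (sp2 (c2 η)) p)
    (heq3 : ∀ p : PtT, p.2 ∈ Set.Ioo a b → divA (zetaOf η) u p = 0) :
    ∀ t ∈ Set.Ioo a b,
      (1 / 2) * deriv (fun s : ℝ => ∫ y in cell,
          ((c1 u (y, s)) ^ 2 + (c2 u (y, s)) ^ 2
            + m ^ 2 * ((sp2 (c1 η) (y, s)) ^ 2 + (sp2 (c2 η) (y, s)) ^ 2))) t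
        + ν * ∫ y in cell,
            ((gradA1 (zetaOf η) (c1 u) (y, t)) ^ 2 + (gradA2 (zetaOf η) (c1 u) (y, t)) ^ 2
              + (gradA1 (zetaOf η) (c2 u) (y, t)) ^ 2
              + (gradA2 (zetaOf η) (c2 u) (y, t)) ^ 2) = 0 :=
  statement16_general ν m a b η u q hη hu hq hper heq1 heq2 heq3
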